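/- For an LPMLN program P and a non-total UE-model (X,Y) of P (i.e., X ⊊ Y), let Z be an interpretation with X ⊊ Z ⊊ Y, and let R be a set of weighted facts whose unweighted rules are exactly the facts {a. | a ∈ Z}. Then Y is a stable model of P ∪ R. -/

import Mathlib

/-!
Since `Y ⊇ Z`, every fact of `R` holds in `Y`, so the GL-reduct of `(P ∪ R)_Y` is that of
`P_Y` together with the facts of `Z`. A proper subset `J ⊊ Y` satisfying it contains `Z`,
hence `X ⊊ J ⊊ Y`, and `(J, Y)` would be an SE-model of `P`, contradicting maximality of the
UE-model `(X, Y)`.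
-/

open scoped Classical

noncomputable section

namespace LPMLN

/-- A ground literal: an atom (numbered by `ℕ`) or its classical negation. -/
inductive Lit where
  | pos : ℕ → Lit
  | neg : ℕ → Lit
deriving DecidableEq

/-- The complementary literal. -/
def Lit.compl : Lit → Lit
  | .pos a => .neg a
  | .neg a => .pos a

/-- A finite set of literals is consistent if it contains no complementary pair. -/
def Consistent (I : Finset Lit) : Prop := ∀ l ∈ I, l.compl ∉ I

/-- An ASP rule, given by its head, positive body and negative body. -/
structure Rule where
  head : Finset Lit
  pos : Finset Lit
  neg : Finset Lit
deriving DecidableEq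

/-- The literals occurring in a rule. -/
def Rule.lits (r : Rule) : Finset Lit := r.head ∪ r.pos ∪ r.neg

/-- Satisfaction of a rule by a set of literals. -/
def Sat (I : Finset Lit) (r : Rule) : Prop :=
  r.pos ⊆ I → r.neg ∩ I = ∅ → (r.head ∩ I).Nonempty

/-- Satisfaction of an ASP program. -/
def SatProg (I : Finset Lit) (prog : Finset Rule) : Prop := ∀ r ∈ prog, Sat I r

/-- The GL-reduct of an ASP program w.r.t. an interpretation. -/
def glReduct (prog : Finset Rule) (I : Finset Lit) : Finset Rule :=
  (prog.filter fun r => r.neg ∩ I = ∅).image fun r => ⟨r.head, r.pos, ∅⟩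

/-- `I` is a stable model of the ASP program `prog`: `I` is a consistent set of
literals satisfying the GL-reduct, no proper subset of which satisfies the GL-reduct. -/
def AspStable (prog : Finset Rule) (I : Finset Lit) : Prop :=
  Consistent I ∧ SatProg I (glReduct prog I) ∧ ∀ J ⊂ I, ¬ SatProg J (glReduct prog I)

/-- A weight: a real number (soft rule) or the symbol `α` (hard rule). -/
inductive Weight where
  | soft : ℝ → Weight
  | hard : Weight

/-- The real value of a soft weight (hard weights get the dummy value 0). -/
def Weight.val : Weight → ℝ
  | .soft w => w
  | .hard => 0

/-- A weighted rule `w : r`. -/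
structure WRule where
  w : Weight
  r : Rule

/-- An LPMLN program: a finite set of weighted rules. -/
abbrev Program := Finset WRule

/-- The LPMLN reduct `P_I`: the rules of `P` satisfied by `I`. -/
def reduct (P : Program) (I : Finset Lit) : Program := P.filter fun wr => Sat I wr.r

/-- The unweighted ASP counterpart of an LPMLN program. -/
def unweighted (P : Program) : Finset Rule := P.image fun wr => wr.r

/-- `I` is a stable model of the LPMLN program `P`: `I` is a stable model of the
unweighted ASP counterpart of the LPMLN reduct `P_I`. -/
def Stable (P : Program) (I : Finset Lit) : Prop :=
  AspStable (unweighted (reduct P I)) I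

/-- The literals occurring in an LPMLN program. -/
def litset (P : Program) : Finset Lit := P.biUnion fun wr => wr.r.lits

/-- `(X, Y)` is an SE-interpretation: a pair of interpretations with `X ⊆ Y`. -/
def SEInterp (X Y : Finset Lit) : Prop := Consistent X ∧ Consistent Y ∧ X ⊆ Y

/-- `(X, Y)` is an SE-model of the LPMLN program `P`: an SE-interpretation such that
`X` satisfies the GL-reduct (w.r.t. `Y`) of the unweighted version of `P_Y`. -/
def SEModel (P : Program) (X Y : Finset Lit) : Prop :=
  SEInterp X Y ∧ SatProg X (glReduct (unweighted (reduct P Y)) Y)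

/-- The number of hard rules of `P` satisfied by `I`. -/
def hardCount (P : Program) (I : Finset Lit) : ℕ :=
  ((reduct P I).filter fun wr => wr.w = Weight.hard).card

/-- The sum of the weights of the soft rules of `P` satisfied by `I`. -/
def softWeight (P : Program) (I : Finset Lit) : ℝ :=
  ∑ wr ∈ ((reduct P I).filter fun wr => wr.w ≠ Weight.hard), wr.w.val

/-- The weight degree `W(P, I) = exp(Σ_{w:r ∈ P_I} w)`, viewed as the real-valued
function `A ↦ exp(c' + k'·A)` of the value `A` given to the symbol `α`, where `k'` is
the number of hard rules of `P` satisfied by `I` and `c'` the sum of the weights of the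
soft rules of `P` satisfied by `I`. -/
def wdeg (P : Program) (I : Finset Lit) (A : ℝ) : ℝ :=
  Real.exp (softWeight P I + A * hardCount P I)

/-- The (finite) set of stable models of `P` (every stable model of `P` is a subset of
`litset P`). -/
def SMset (P : Program) : Finset (Finset Lit) :=
  (litset P).powerset.filter fun I => Stable P I

/-- The probability degree `Pr(P, I)`: the limit, as `α → ∞`, of
`W(P, I) / Σ_{I' ∈ SM(P)} W(P, I')` if `I` is a stable model of `P`, and `0` otherwise. -/
def PrDeg (P : Program) (I : Finset Lit) : ℝ :=
  if Stable P I then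
    Filter.limUnder Filter.atTop fun A => wdeg P I A / ∑ I' ∈ SMset P, wdeg P I' A
  else 0

/-- `I` is a probabilistic stable model of `P`: a stable model of `P` satisfying the
maximum number of hard rules of `P` (equivalently, with nonzero probability degree). -/
def PStable (P : Program) (I : Finset Lit) : Prop :=
  Stable P I ∧ ∀ J, Stable P J → hardCount P J ≤ hardCount P I

/-- Semi-strong equivalence: the extensions by any LPMLN program have the same
stable models. -/
def SemiStrongEq (P Q : Program) : Prop :=
  ∀ R : Program, ∀ I, Stable (P ∪ R) I ↔ Stable (Q ∪ R) I

/-- p-ordinary equivalence: same stable models and same probability degrees. -/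
def POrdEq (P Q : Program) : Prop :=
  (∀ I, Stable P I ↔ Stable Q I) ∧ ∀ I, Stable P I → PrDeg P I = PrDeg Q I

/-- p-strong equivalence: p-ordinary equivalence under every extension. -/
def PStrongEq (P Q : Program) : Prop := ∀ R : Program, POrdEq (P ∪ R) (Q ∪ R)

/-- Comparison of the symbolic weight degrees of two interpretations w.r.t. `P`:
`exp(c + k·α) ≤ exp(c' + k'·α)` iff `k < k'`, or `k = k'` and `c ≤ c'`. -/
def WLe (P : Program) (I J : Finset Lit) : Prop :=
  hardCount P I < hardCount P J ∨
    (hardCount P I = hardCount P J ∧ softWeight P I ≤ softWeight P J)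

/-- q-strong equivalence: same stable models under every extension, with
order-preserving weight degrees. -/
def QStrongEq (P Q : Program) : Prop :=
  ∀ R : Program,
    (∀ I, Stable (P ∪ R) I ↔ Stable (Q ∪ R) I) ∧
    ∀ X Y, Stable (P ∪ R) X → Stable (P ∪ R) Y → (WLe (P ∪ R) X Y ↔ WLe (Q ∪ R) X Y)

/-- A soft stable model of `P`: a stable model of `P` satisfying all hard rules of `P`. -/
def SoftStable (P : Program) (I : Finset Lit) : Prop :=
  Stable P I ∧ ∀ wr ∈ P, wr.w = Weight.hard → Sat I wr.r

/-- A soft SE-model of `P`: an SE-model `(X, Y)` of `P` such that `Y` satisfies all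
hard rules of `P`. -/
def SoftSEModel (P : Program) (X Y : Finset Lit) : Prop :=
  SEModel P X Y ∧ ∀ wr ∈ P, wr.w = Weight.hard → Sat Y wr.r

/-- The (finite) set of soft stable models of `P`. -/
def SSMset (P : Program) : Finset (Finset Lit) :=
  (litset P).powerset.filter fun I => SoftStable P I

/-- The probability degree under the soft stable model semantics:
`Pr_s(P, X) = W_s(P, X) / Σ_{X' ∈ SSM(P)} W_s(P, X')`, where
`W_s(P, X) = exp(Σ_{w:r ∈ P^s, X ⊨ r} w)`. -/
def PrS (P : Program) (X : Finset Lit) : ℝ :=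
  Real.exp (softWeight P X) / ∑ X' ∈ SSMset P, Real.exp (softWeight P X')

/-- sp-strong equivalence: p-strong equivalence under the soft stable model
semantics. -/
def SPStrongEq (P Q : Program) : Prop :=
  ∀ R : Program,
    (∀ I, SoftStable (P ∪ R) I ↔ SoftStable (Q ∪ R) I) ∧
    ∀ X, SoftStable (P ∪ R) X → PrS (P ∪ R) X = PrS (Q ∪ R) X

/-- `(X, Y)` is a UE-model of `P`: an SE-model with `X = Y`, or with `X ⊊ Y` such that
no `X'` strictly between `X` and `Y` gives an SE-model `(X', Y)`. -/
def UEModel (P : Program) (X Y : Finset Lit) : Prop :=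
  SEModel P X Y ∧
    (X = Y ∨ (X ⊂ Y ∧ ∀ X', X ⊂ X' → X' ⊂ Y → ¬ SEModel P X' Y))

/-- A program consisting of weighted facts only (rules with empty bodies). -/
def IsFactProg (R : Program) : Prop := ∀ wr ∈ R, wr.r.pos = ∅ ∧ wr.r.neg = ∅

/-- p-uniform equivalence: p-ordinary equivalence under every extension by a set of
weighted facts. -/
def PUniformEq (P Q : Program) : Prop :=
  ∀ R : Program, IsFactProg R → POrdEq (P ∪ R) (Q ∪ R)

/-- The flattening rules `R(X, Y, a)`: the two hard rules
`α : ← X, not Y, a` and `α : a ← X, not Y`. -/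
def flatten (X Y : Finset Lit) (a : ℕ) : Program :=
  {⟨Weight.hard, ⟨∅, X ∪ {Lit.pos a}, Y⟩⟩, ⟨Weight.hard, ⟨{Lit.pos a}, X, Y⟩⟩}

/-- The hard fact `α : l`. -/
def factOf (l : Lit) : WRule := ⟨Weight.hard, ⟨{l}, ∅, ∅⟩⟩

/-- The base flattening extension `E⁰(P, U) = P ∪ {α : a | a ∈ U}`. -/
def E0 (P : Program) (U : Finset Lit) : Program := P ∪ U.image factOf

/-- `IsFlatExt P U k E` holds iff `E` is a flattening extension `E^k(P, U)`:
`E⁰(P, U) = P ∪ {α : a | a ∈ U}` and `E^{i+1}(P, U) = E^i(P, U) ∪ R(X ∩ U, U − X, c)`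
where `X` is a probabilistic stable model of `E^i(P, U)` and `c` is a fresh atom. -/
inductive IsFlatExt (P : Program) (U : Finset Lit) : ℕ → Program → Prop
  | zero : IsFlatExt P U 0 (E0 P U)
  | succ {i : ℕ} {E : Program} {X : Finset Lit} {c : ℕ} :
      IsFlatExt P U i E → PStable E X →
      Lit.pos c ∉ litset E → Lit.neg c ∉ litset E →
      IsFlatExt P U (i + 1) (E ∪ flatten (X ∩ U) (U \ X) c)

def Rule.fact (l : Lit) : Rule := ⟨{l}, ∅, ∅⟩

theorem Consistent.mono {I J : Finset Lit} (hI : Consistent I) (hJI : J ⊆ I) :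
    Consistent J :=
  fun l hl hc => hI l (hJI hl) (hJI hc)

theorem satProg_union_iff {I : Finset Lit} {p q : Finset Rule} :
    SatProg I (p ∪ q) ↔ SatProg I p ∧ SatProg I q := by
  simp only [SatProg, Finset.mem_union, or_imp, forall_and]

theorem sat_fact_iff {I : Finset Lit} {l : Lit} : Sat I (Rule.fact l) ↔ l ∈ I := by
  simp [Sat, Rule.fact, Finset.Nonempty]

theorem satProg_facts_iff {I Z : Finset Lit} :
    SatProg I (Z.image Rule.fact) ↔ Z ⊆ I := by
  simp only [SatProg, Finset.forall_mem_image, sat_fact_iff, Finset.subset_iff]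

theorem glReduct_facts (Z I : Finset Lit) :
    glReduct (Z.image Rule.fact) I = Z.image Rule.fact := by
  ext r
  simp [glReduct, Rule.fact]

theorem glReduct_union (p q : Finset Rule) (I : Finset Lit) :
    glReduct (p ∪ q) I = glReduct p I ∪ glReduct q I := by
  rw [glReduct, Finset.filter_union, Finset.image_union]
  rfl

theorem unweighted_union (P R : Program) :
    unweighted (P ∪ R) = unweighted P ∪ unweighted R :=
  Finset.image_union P R

theorem satProg_glReduct_of_satProg {I : Finset Lit} {prog : Finset Rule}
    (h : SatProg I prog) : SatProg I (glReduct prog I) := by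
  simp only [SatProg, glReduct, Finset.forall_mem_image, Finset.mem_filter, and_imp]
  exact fun r hr hneg hpos _ => h r hr hpos hneg

theorem satProg_unweighted_reduct (P : Program) (I : Finset Lit) :
    SatProg I (unweighted (reduct P I)) := by
  simp only [SatProg, unweighted, reduct, Finset.forall_mem_image, Finset.mem_filter]
  exact fun _ h => h.2

theorem reduct_eq_self {P : Program} {I : Finset Lit} (h : SatProg I (unweighted P)) :
    reduct P I = P :=
  Finset.filter_true_of_mem fun _ hwr => h _ (Finset.mem_image_of_mem _ hwr)

theorem glReduct_unweighted_reduct_union {P R : Program} {I : Finset Lit}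
    (hR : SatProg I (unweighted R)) :
    glReduct (unweighted (reduct (P ∪ R) I)) I =
      glReduct (unweighted (reduct P I)) I ∪ glReduct (unweighted R) I := by
  rw [reduct, Finset.filter_union, ← reduct, ← reduct, reduct_eq_self hR,
    unweighted_union, glReduct_union]

theorem UEModel.not_seModel_of_lt {P : Program} {X Y X' : Finset Lit}
    (hUE : UEModel P X Y) (hXX' : X ⊂ X') (hX'Y : X' ⊂ Y) : ¬ SEModel P X' Y := by
  rcases hUE.2 with rfl | ⟨_, hmin⟩
  · exact absurd (hXX'.trans hX'Y) (lt_irrefl X)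
  · exact hmin X' hXX' hX'Y

theorem ueModel_fact_extension_stable_general (P : Program) (X Y Z : Finset Lit) (R : Program)
    (hUE : UEModel P X Y)
    (hXZ : X ⊂ Z) (hZY : Z ⊂ Y)
    (hR : unweighted R = Z.image (fun l => (⟨{l}, ∅, ∅⟩ : Rule))) :
    Stable (P ∪ R) Y := by
  change unweighted R = Z.image Rule.fact at hR
  have hConsY : Consistent Y := hUE.1.1.2.1
  have hRY : SatProg Y (unweighted R) := hR ▸ satProg_facts_iff.mpr hZY.subset
  unfold Stable AspStable
  rw [glReduct_unweighted_reduct_union hRY, hR, glReduct_facts]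
  refine ⟨hConsY, satProg_union_iff.mpr ⟨?_, satProg_facts_iff.mpr hZY.subset⟩, ?_⟩
  · exact satProg_glReduct_of_satProg (satProg_unweighted_reduct P Y)
  · intro J hJY hJ
    obtain ⟨hJP, hZJ⟩ := satProg_union_iff.mp hJ
    have hSE : SEModel P J Y := ⟨⟨hConsY.mono hJY.subset, hConsY, hJY.subset⟩, hJP⟩
    exact hUE.not_seModel_of_lt (hXZ.trans_le (satProg_facts_iff.mp hZJ)) hJY hSE

/-- For an LPMLN program `P` and a non-total UE-model `(X, Y)` of `P`
(i.e., `X ⊊ Y`), let `Z` be an interpretation with `X ⊊ Z ⊊ Y`, and let `R` be a set of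
weighted facts whose unweighted rules are exactly the facts `{a. | a ∈ Z}`. Then `Y` is
a stable model of `P ∪ R`. -/
theorem ueModel_fact_extension_stable (P : Program) (X Y Z : Finset Lit) (R : Program)
    (hUE : UEModel P X Y) (hXY : X ⊂ Y)
    (hXZ : X ⊂ Z) (hZY : Z ⊂ Y)
    (hR : unweighted R = Z.image (fun l => (⟨{l}, ∅, ∅⟩ : Rule))) :
    Stable (P ∪ R) Y :=
  ueModel_fact_extension_stable_general P X Y Z R hUE hXZ hZY hR

end LPMLN
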